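/- arXiv:1909.09923 — 3 statements merged into one kernel-verified Lean document; each statement's English description precedes it below -/
import Mathlib

section
/- Let Th, HRTT, μ be positive reals and x > 1. Define t₁ = Th/(μ·(x−1)) + HRTT (duration of phase 1), t₂ = (Th + HRTT·μ·(x−1))/μ (duration of phase 2), and t₃ = HRTT (duration of phase 3). Then t₃/(t₁ + t₂ + t₃) = (x − 1)/((Th/(HRTT·μ))·x + (x² − 1)). -/
/-- The steady-state fraction of time a bottlenecked flow has no packets:
`t₃ / (t₁ + t₂ + t₃) = (x - 1) / ((Th/(HRTT·μ))·x + (x² - 1))`. -/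
theorem phase_fraction_eq (Th HRTT μ x : ℝ)
    (hTh : 0 < Th) (hH : 0 < HRTT) (hμ : 0 < μ) (hx : 1 < x) :
    let t₁ := Th / (μ * (x - 1)) + HRTT
    let t₂ := (Th + HRTT * μ * (x - 1)) / μ
    let t₃ := HRTT
    t₃ / (t₁ + t₂ + t₃) = (x - 1) / (Th / (HRTT * μ) * x + (x ^ 2 - 1)) := by
  intro t₁ t₂ t₃
  have hx1 : (0:ℝ) < x - 1 := by linarith
  have hμ' : μ ≠ 0 := ne_of_gt hμ
  have hH' : HRTT ≠ 0 := ne_of_gt hH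
  have hd1 : 0 < t₁ + t₂ + t₃ := by
    have h1 : 0 < Th / (μ * (x - 1)) := div_pos hTh (mul_pos hμ hx1)
    have h2 : 0 < (Th + HRTT * μ * (x - 1)) / μ :=
      div_pos (by positivity) hμ
    simp only [t₁, t₂, t₃]
    linarith
  have hd2 : 0 < Th / (HRTT * μ) * x + (x ^ 2 - 1) := by
    have : 0 < Th / (HRTT * μ) := div_pos hTh (mul_pos hH hμ)
    nlinarith
  rw [div_eq_div_iff hd1.ne' hd2.ne']
  simp only [t₁, t₂, t₃]
  field_simp
  ring
end

section
/- For every real c > 0 and every real x > 1, (x − 1)/(c·x + x² − 1) ≤ 1/((√c + 1)² + 1), with equality if and only if x = √c + 1. In particular the maximum of E_f(x, Th) over x > 1 is 1/((√c+1)² + 1), attained at x = √c + 1. -/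
/-- For `c > 0` and `x > 1`, `(x-1)/(c·x + x² - 1) ≤ 1/((√c+1)² + 1)`,
with equality iff `x = √c + 1`. -/
theorem g_le_max_and_eq_iff (c x : ℝ) (hc : 0 < c) (hx : 1 < x) :
    (x - 1) / (c * x + x ^ 2 - 1) ≤ 1 / ((Real.sqrt c + 1) ^ 2 + 1) ∧
    ((x - 1) / (c * x + x ^ 2 - 1) = 1 / ((Real.sqrt c + 1) ^ 2 + 1) ↔
      x = Real.sqrt c + 1) := by
  set s := Real.sqrt c with hs
  have hs2 : s ^ 2 = c := Real.sq_sqrt hc.le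
  have hs0 : 0 ≤ s := Real.sqrt_nonneg c
  have hD : 0 < c * x + x ^ 2 - 1 := by nlinarith
  have hM : 0 < (s + 1) ^ 2 + 1 := by positivity
  constructor
  · rw [div_le_div_iff₀ hD hM]
    nlinarith [sq_nonneg (x - 1 - s)]
  · rw [div_eq_div_iff hD.ne' hM.ne']
    constructor
    · intro h
      have h2 : (x - 1 - s) ^ 2 = 0 := by nlinarith
      have := pow_eq_zero_iff (n := 2) (by norm_num) |>.mp h2
      linarith
    · intro h; subst h; ring_nf; nlinarith
end

section
/- For every real x > 1, (x − 1)/(x + x² − 1) ≤ 1/5, with equality if and only if x = 2. Hence, when the pause threshold equals the one-hop bandwidth-delay product (Th = HRTT·μ, i.e., c = 1), a bottlenecked flow runs out of packets at most 20% of the time, with the worst case occurring when the enqueue rate is exactly twice the dequeue rate. -/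
/-- For `x > 1`, `(x-1)/(x + x² - 1) ≤ 1/5`, with equality iff `x = 2`:
with `Th = HRTT·μ` (c = 1), the flow runs out of packets at most 20% of the
time, worst case when the enqueue rate is twice the dequeue rate. -/
theorem g_le_one_fifth (x : ℝ) (hx : 1 < x) :
    (x - 1) / (x + x ^ 2 - 1) ≤ 1 / 5 ∧
    ((x - 1) / (x + x ^ 2 - 1) = 1 / 5 ↔ x = 2) := by
  have hd : (0:ℝ) < x + x ^ 2 - 1 := by nlinarith
  constructor
  · rw [div_le_div_iff₀ hd (by norm_num)]
    nlinarith [sq_nonneg (x - 2)]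
  · constructor
    · intro h
      rw [div_eq_div_iff hd.ne' (by norm_num)] at h
      nlinarith [sq_nonneg (x - 2)]
    · rintro rfl; norm_num
end
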